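/- Let n ≥ 4 and let R be a solvable complex Leibniz algebra whose nilradical is isomorphic to F_n^1. Then dim R = n+1 or dim R = n+2. -/

import Mathlib

open Finset Module

/-- The Leibniz identity for a bilinear bracket `b`. -/
def IsLeibniz {L : Type*} [AddCommGroup L] [Module ℂ L]
    (b : L →ₗ[ℂ] L →ₗ[ℂ] L) : Prop :=
  ∀ x y z, b x (b y z) = b (b x y) z - b (b x z) y

/-- The submodule spanned by all brackets `[S, T]`. -/
def bracketSpan {L : Type*} [AddCommGroup L] [Module ℂ L]
    (b : L →ₗ[ℂ] L →ₗ[ℂ] L) (S T : Submodule ℂ L) : Submodule ℂ L :=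
  Submodule.span ℂ {z | ∃ x ∈ S, ∃ y ∈ T, z = b x y}

/-- The lower central series: `lcs b k` is `L^{k+1}`, i.e. `lcs b 0 = L¹ = L`. -/
def lcs {L : Type*} [AddCommGroup L] [Module ℂ L]
    (b : L →ₗ[ℂ] L →ₗ[ℂ] L) : ℕ → Submodule ℂ L
  | 0 => ⊤
  | k+1 => bracketSpan b (lcs b k) ⊤

/-- The derived series: `derSeries b s` is `L^{[s+1]}`. -/
def derSeries {L : Type*} [AddCommGroup L] [Module ℂ L]
    (b : L →ₗ[ℂ] L →ₗ[ℂ] L) : ℕ → Submodule ℂ L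
  | 0 => ⊤
  | s+1 => bracketSpan b (derSeries b s) (derSeries b s)

/-- The algebra `(L, b)` is nilpotent. -/
def IsNilpotentAlg {L : Type*} [AddCommGroup L] [Module ℂ L]
    (b : L →ₗ[ℂ] L →ₗ[ℂ] L) : Prop :=
  ∃ k, lcs b k = ⊥

/-- The algebra `(L, b)` is solvable. -/
def IsSolvableAlg {L : Type*} [AddCommGroup L] [Module ℂ L]
    (b : L →ₗ[ℂ] L →ₗ[ℂ] L) : Prop :=
  ∃ s, derSeries b s = ⊥

/-- `I` is a two-sided ideal of `(L, b)`. -/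
def IsIdeal {L : Type*} [AddCommGroup L] [Module ℂ L]
    (b : L →ₗ[ℂ] L →ₗ[ℂ] L) (I : Submodule ℂ L) : Prop :=
  ∀ a ∈ I, ∀ y : L, b a y ∈ I ∧ b y a ∈ I

/-- Lower central series of the ideal `I` computed inside `L`:
`idealLCS b I k` is `I^{k+1}`. -/
def idealLCS {L : Type*} [AddCommGroup L] [Module ℂ L]
    (b : L →ₗ[ℂ] L →ₗ[ℂ] L) (I : Submodule ℂ L) : ℕ → Submodule ℂ L
  | 0 => I
  | k+1 => bracketSpan b (idealLCS b I k) I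

/-- `I` is a nilpotent two-sided ideal of `(L, b)`. -/
def IsNilpotentIdeal {L : Type*} [AddCommGroup L] [Module ℂ L]
    (b : L →ₗ[ℂ] L →ₗ[ℂ] L) (I : Submodule ℂ L) : Prop :=
  IsIdeal b I ∧ ∃ k, idealLCS b I k = ⊥

/-- `I` is the nilradical (the maximal nilpotent ideal) of `(L, b)`. -/
def IsNilradical {L : Type*} [AddCommGroup L] [Module ℂ L]
    (b : L →ₗ[ℂ] L →ₗ[ℂ] L) (I : Submodule ℂ L) : Prop :=
  IsNilpotentIdeal b I ∧ ∀ J : Submodule ℂ L, IsNilpotentIdeal b J → J ≤ I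

/-- Isomorphism of bracket algebras. -/
def LeibnizIso {L M : Type*} [AddCommGroup L] [Module ℂ L] [AddCommGroup M] [Module ℂ M]
    (bL : L →ₗ[ℂ] L →ₗ[ℂ] L) (bM : M →ₗ[ℂ] M →ₗ[ℂ] M) : Prop :=
  ∃ e : L ≃ₗ[ℂ] M, ∀ x y : L, e (bL x y) = bM (e x) (e y)

/-- The nilradical of `(L, bL)` is isomorphic (as an algebra) to `(M, bM)`. -/
def NilradicalIso {L M : Type*} [AddCommGroup L] [Module ℂ L] [AddCommGroup M] [Module ℂ M]
    (bL : L →ₗ[ℂ] L →ₗ[ℂ] L) (bM : M →ₗ[ℂ] M →ₗ[ℂ] M) : Prop :=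
  ∃ I : Submodule ℂ L, IsNilradical bL I ∧
    ∃ f : M →ₗ[ℂ] L, Function.Injective f ∧ LinearMap.range f = I ∧
      ∀ x y : M, f (bM x y) = bL (f x) (f y)

/-- A derivation of the algebra `(L, b)`. -/
def IsDerivation {L : Type*} [AddCommGroup L] [Module ℂ L]
    (b : L →ₗ[ℂ] L →ₗ[ℂ] L) (d : L →ₗ[ℂ] L) : Prop :=
  ∀ x y : L, d (b x y) = b (d x) y + b x (d y)

/-- The bilinear bracket on `Fin n → ℂ` determined by structure constants `c`. -/
noncomputable def bilin (n : ℕ) (c : Fin n → Fin n → Fin n → ℂ) :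
    (Fin n → ℂ) →ₗ[ℂ] (Fin n → ℂ) →ₗ[ℂ] (Fin n → ℂ) :=
  LinearMap.mk₂ ℂ (fun x y k => ∑ i, ∑ j, x i * y j * c i j k)
    (by intro x x' y; funext k; simp [add_mul, Finset.sum_add_distrib])
    (by intro a x y; funext k; simp [Finset.mul_sum, mul_assoc])
    (by intro x y y'; funext k; simp [mul_add, add_mul, Finset.sum_add_distrib])
    (by intro a x y; funext k; simp [Finset.mul_sum, mul_assoc, mul_left_comm])

/-- The paper's basis vector `e_i` (1-indexed: valid for `1 ≤ i ≤ n`). -/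
noncomputable def E (n : ℕ) (i : ℕ) : Fin n → ℂ :=
  if h : 1 ≤ i ∧ i ≤ n then Pi.single (⟨i - 1, by omega⟩ : Fin n) 1 else 0

/-- Structure constants of the null-filiform algebra `NF_n`:
`[e_i, e_1] = e_{i+1}` for `1 ≤ i ≤ n-1` (indices are 0-based). -/
noncomputable def cNF (n : ℕ) : Fin n → Fin n → Fin n → ℂ := fun i j k =>
  if j.val = 0 ∧ k.val = i.val + 1 then 1 else 0

/-- Structure constants of `F_n^1`: `[e_1,e_1] = e_3`, `[e_i,e_1] = e_{i+1}` for `2 ≤ i ≤ n-1`. -/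
noncomputable def cF1 (n : ℕ) : Fin n → Fin n → Fin n → ℂ := fun i j k =>
  if j.val = 0 ∧ ((i.val = 0 ∧ k.val = 2) ∨ (1 ≤ i.val ∧ k.val = i.val + 1)) then 1 else 0

/-- Structure constants of `F_n^2`: `[e_1,e_1] = e_3`, `[e_i,e_1] = e_{i+1}` for `3 ≤ i ≤ n-1`. -/
noncomputable def cF2 (n : ℕ) : Fin n → Fin n → Fin n → ℂ := fun i j k =>
  if j.val = 0 ∧ ((i.val = 0 ∧ k.val = 2) ∨ (2 ≤ i.val ∧ k.val = i.val + 1)) then 1 else 0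

/-- Structure constants of the filiform Lie algebra `n_{n,1}`:
`[e_i,e_1] = -[e_1,e_i] = e_{i+1}` for `2 ≤ i ≤ n-1`. -/
noncomputable def cNn (n : ℕ) : Fin n → Fin n → Fin n → ℂ := fun i j k =>
  (if j.val = 0 ∧ 1 ≤ i.val ∧ k.val = i.val + 1 then 1 else 0)
  - (if i.val = 0 ∧ 1 ≤ j.val ∧ k.val = j.val + 1 then 1 else 0)

/-- Structure constants of the filiform Lie algebra `Q_{2n}` (on `Fin (2*n)`). -/
noncomputable def cQ (n : ℕ) : Fin (2*n) → Fin (2*n) → Fin (2*n) → ℂ := fun i j k =>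
  (if j.val = 0 ∧ 1 ≤ i.val ∧ i.val ≤ 2*n - 3 ∧ k.val = i.val + 1 then 1 else 0)
  - (if i.val = 0 ∧ 1 ≤ j.val ∧ j.val ≤ 2*n - 3 ∧ k.val = j.val + 1 then 1 else 0)
  + (if 1 ≤ i.val ∧ i.val ≤ n - 1 ∧ i.val + j.val = 2*n - 1 ∧ k.val = 2*n - 1
      then (-1 : ℂ)^(i.val + 1) else 0)
  - (if 1 ≤ j.val ∧ j.val ≤ n - 1 ∧ i.val + j.val = 2*n - 1 ∧ k.val = 2*n - 1
      then (-1 : ℂ)^(j.val + 1) else 0)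

/-- Structure constants of `R_{n+1,1}(γ₁,γ₂,γ₃)` (basis `e_1,…,e_n,x`; `x` has 0-based index `n`). -/
noncomputable def cRn (n : ℕ) (g1 g2 g3 : ℂ) : Fin (n+1) → Fin (n+1) → Fin (n+1) → ℂ := fun i j k =>
  (if j.val = 0 ∧ 1 ≤ i.val ∧ i.val ≤ n - 2 ∧ k.val = i.val + 1 then 1 else 0)
  - (if i.val = 0 ∧ 1 ≤ j.val ∧ j.val ≤ n - 2 ∧ k.val = j.val + 1 then 1 else 0)
  + (if i.val = 0 ∧ j.val = n ∧ k.val = 0 then 1 else 0)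
  - (if i.val = n ∧ j.val = 0 ∧ k.val = 0 then 1 else 0)
  + (if i.val = n ∧ j.val = 0 ∧ k.val = n - 1 then g1 else 0)
  + (if 1 ≤ i.val ∧ i.val ≤ n - 2 ∧ j.val = n ∧ k.val = i.val then ((i.val : ℂ) + 1 - n) else 0)
  + (if i.val = n ∧ 1 ≤ j.val ∧ j.val ≤ n - 2 ∧ k.val = j.val then ((n : ℂ) - j.val - 1) else 0)
  + (if i.val = n ∧ j.val = 1 ∧ k.val = n - 1 then g2 else 0)
  + (if i.val = n ∧ j.val = n ∧ k.val = n - 1 then g3 else 0)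

/-- Structure constants of `R_{2n+1,1}(γ₁,γ₂,γ₃)` (basis `e_1,…,e_{2n},x`; `x` has 0-based index `2n`). -/
noncomputable def cRQ (n : ℕ) (g1 g2 g3 : ℂ) : Fin (2*n+1) → Fin (2*n+1) → Fin (2*n+1) → ℂ := fun i j k =>
  (if j.val = 0 ∧ 1 ≤ i.val ∧ i.val ≤ 2*n - 3 ∧ k.val = i.val + 1 then 1 else 0)
  - (if i.val = 0 ∧ 1 ≤ j.val ∧ j.val ≤ 2*n - 3 ∧ k.val = j.val + 1 then 1 else 0)
  + (if 1 ≤ i.val ∧ i.val ≤ n - 1 ∧ i.val + j.val = 2*n - 1 ∧ k.val = 2*n - 1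
      then (-1 : ℂ)^(i.val + 1) else 0)
  - (if 1 ≤ j.val ∧ j.val ≤ n - 1 ∧ i.val + j.val = 2*n - 1 ∧ k.val = 2*n - 1
      then (-1 : ℂ)^(j.val + 1) else 0)
  + (if i.val = 0 ∧ j.val = 2*n ∧ k.val = 0 then 1 else 0)
  - (if i.val = 2*n ∧ j.val = 0 ∧ k.val = 0 then 1 else 0)
  + (if i.val = 2*n ∧ j.val = 0 ∧ k.val = n - 1 then g1 else 0)
  + (if 1 ≤ i.val ∧ i.val ≤ 2*n - 2 ∧ j.val = 2*n ∧ k.val = i.val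
      then ((2*n : ℂ) + 2*((i.val : ℂ) + 1) - 7)/2 else 0)
  - (if i.val = 2*n ∧ 1 ≤ j.val ∧ j.val ≤ 2*n - 2 ∧ k.val = j.val
      then ((2*n : ℂ) + 2*((j.val : ℂ) + 1) - 7)/2 else 0)
  + (if i.val = 2*n ∧ j.val = 1 ∧ k.val = n - 1 then g2 else 0)
  + (if i.val = 2*n ∧ j.val = 2*n ∧ k.val = n - 1 then g3 else 0)

/-!
Right multiplication by any `y ∈ R` restricts to a derivation `D_y` of the nilradical
`N ≅ F_n^1`. Every derivation `D` of `F_n^1` preserves `N² = span {e₃, …, eₙ}`, and if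
`D e₁ ∈ N²` then `D` maps `N` into `N²` and `span {e_k, …, e_n}` into `span {e_{k+1}, …, e_n}`
for `k ≥ 3`. Hence `K = {y | [e₁, y] ∈ N²}` has codimension at most two, it is an ideal
containing `N`, and every ideal `Q ≤ K` with `[Q, Q] ≤ N` is nilpotent. Descending along the
derived series of `K`, solvability forces `K = N`, so `dim R ≤ n + 2`; and `dim R > n` since `R`
is not nilpotent.
-/

section LeibnizAlgebra

variable {L : Type*} [AddCommGroup L] [Module ℂ L] {b : L →ₗ[ℂ] L →ₗ[ℂ] L}

lemma bracketSpan_le {S T V : Submodule ℂ L} (h : ∀ x ∈ S, ∀ y ∈ T, b x y ∈ V) :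
    bracketSpan b S T ≤ V := by
  rw [bracketSpan, Submodule.span_le]
  rintro z ⟨x, hx, y, hy, rfl⟩
  exact h x hx y hy

lemma mem_bracketSpan {S T : Submodule ℂ L} {x y : L} (hx : x ∈ S) (hy : y ∈ T) :
    b x y ∈ bracketSpan b S T :=
  Submodule.subset_span ⟨x, hx, y, hy, rfl⟩

lemma bracketSpan_mono {S S' T T' : Submodule ℂ L} (hS : S ≤ S') (hT : T ≤ T') :
    bracketSpan b S T ≤ bracketSpan b S' T' :=
  bracketSpan_le fun _ hx _ hy => mem_bracketSpan (hS hx) (hT hy)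

lemma IsIdeal.sup {I J : Submodule ℂ L} (hI : IsIdeal b I) (hJ : IsIdeal b J) :
    IsIdeal b (I ⊔ J) := by
  intro a ha y
  obtain ⟨p, hp, q, hq, rfl⟩ := Submodule.mem_sup.1 ha
  simp only [map_add, LinearMap.add_apply]
  exact ⟨add_mem (Submodule.mem_sup_left (hI p hp y).1) (Submodule.mem_sup_right (hJ q hq y).1),
    add_mem (Submodule.mem_sup_left (hI p hp y).2) (Submodule.mem_sup_right (hJ q hq y).2)⟩

lemma IsIdeal.bracketSpan_self (hb : IsLeibniz b) {P : Submodule ℂ L} (hP : IsIdeal b P) :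
    IsIdeal b (bracketSpan b P P) := by
  let N : Submodule ℂ L :=
    { carrier := {a | ∀ y, b a y ∈ bracketSpan b P P ∧ b y a ∈ bracketSpan b P P}
      add_mem' := fun ha ha' y => by
        simp only [map_add, LinearMap.add_apply]
        exact ⟨add_mem (ha y).1 (ha' y).1, add_mem (ha y).2 (ha' y).2⟩
      zero_mem' := fun y => by simp
      smul_mem' := fun c a ha y => by
        simp only [map_smul, LinearMap.smul_apply]
        exact ⟨Submodule.smul_mem _ c (ha y).1, Submodule.smul_mem _ c (ha y).2⟩ }
  have hN : bracketSpan b P P ≤ N := by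
    refine bracketSpan_le fun p hp p' hp' y => ⟨?_, ?_⟩
    · rw [show b (b p p') y = b p (b p' y) + b (b p y) p' by rw [hb]; abel]
      exact add_mem (mem_bracketSpan hp (hP p' hp' y).1) (mem_bracketSpan (hP p hp y).1 hp')
    · rw [hb y p p']
      exact sub_mem (mem_bracketSpan (hP p hp y).2 hp') (mem_bracketSpan (hP p' hp' y).2 hp)
  exact fun a ha y => hN ha y

lemma bracketSpan_sup_le {P I : Submodule ℂ L} (hI : IsIdeal b I) :
    bracketSpan b (P ⊔ I) (P ⊔ I) ≤ bracketSpan b P P ⊔ I := by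
  refine bracketSpan_le fun x hx y hy => ?_
  obtain ⟨p, hp, a, ha, rfl⟩ := Submodule.mem_sup.1 hx
  obtain ⟨p', hp', a', ha', rfl⟩ := Submodule.mem_sup.1 hy
  simp only [map_add, LinearMap.add_apply]
  refine add_mem (add_mem ?_ ?_) (add_mem ?_ ?_)
  · exact Submodule.mem_sup_left (mem_bracketSpan hp hp')
  · exact Submodule.mem_sup_right (hI a ha p').1
  · exact Submodule.mem_sup_right (hI a' ha' p).2
  · exact Submodule.mem_sup_right (hI a ha a').1

def idealDerSeries (b : L →ₗ[ℂ] L →ₗ[ℂ] L) (K : Submodule ℂ L) : ℕ → Submodule ℂ L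
  | 0 => K
  | s + 1 => bracketSpan b (idealDerSeries b K s) (idealDerSeries b K s)

lemma idealDerSeries_le_derSeries (K : Submodule ℂ L) :
    ∀ s, idealDerSeries b K s ≤ derSeries b s
  | 0 => le_top
  | s + 1 => bracketSpan_mono (idealDerSeries_le_derSeries K s) (idealDerSeries_le_derSeries K s)

lemma IsIdeal.idealDerSeries (hb : IsLeibniz b) {K : Submodule ℂ L} (hK : IsIdeal b K) :
    ∀ s, IsIdeal b (idealDerSeries b K s)
  | 0 => hK
  | s + 1 => (hK.idealDerSeries hb s).bracketSpan_self hb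

lemma idealDerSeries_le_self {K : Submodule ℂ L} (hK : IsIdeal b K) :
    ∀ s, idealDerSeries b K s ≤ K
  | 0 => le_rfl
  | s + 1 => bracketSpan_le fun x hx y _ => (hK x (idealDerSeries_le_self hK s hx) y).1

lemma idealLCS_top : ∀ k, idealLCS b ⊤ k = lcs b k
  | 0 => rfl
  | k + 1 => congrArg (bracketSpan b · ⊤) (idealLCS_top k)

lemma IsNilradical.ne_top {I : Submodule ℂ L} (hI : IsNilradical b I)
    (hb : ¬ IsNilpotentAlg b) : I ≠ ⊤ := by
  rintro rfl
  obtain ⟨k, hk⟩ := hI.1.2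
  exact hb ⟨k, idealLCS_top (b := b) k ▸ hk⟩

lemma idealLCS_add_le {Q : Submodule ℂ L} {V : ℕ → Submodule ℂ L} {m : ℕ}
    (h : idealLCS b Q m ≤ V 0) (hV : ∀ k, ∀ x ∈ V k, ∀ y ∈ Q, b x y ∈ V (k + 1)) :
    ∀ k, idealLCS b Q (m + k) ≤ V k
  | 0 => h
  | k + 1 => bracketSpan_le fun x hx y hy => hV k x (idealLCS_add_le h hV k hx) y hy

lemma IsNilradical.le_of_isSolvableAlg {I K : Submodule ℂ L} (hI : IsNilradical b I)
    (hb : IsLeibniz b) (hsolv : IsSolvableAlg b) (hK : IsIdeal b K) (hIK : I ≤ K)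
    (hnil : ∀ Q, IsIdeal b Q → Q ≤ K → bracketSpan b Q Q ≤ I → ∃ k, idealLCS b Q k = ⊥) :
    K ≤ I := by
  obtain ⟨s, hs⟩ := hsolv
  have step : ∀ t, idealDerSeries b K (t + 1) ≤ I → idealDerSeries b K t ≤ I := by
    intro t ht
    set P := idealDerSeries b K t
    have hQ : IsIdeal b (P ⊔ I) := (hK.idealDerSeries hb t).sup hI.1.1
    refine le_sup_left.trans (hI.2 _ ⟨hQ, hnil _ hQ ?_ ?_⟩)
    · exact sup_le (idealDerSeries_le_self hK t) hIK
    · exact (bracketSpan_sup_le hI.1.1).trans (sup_le ht le_rfl)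
  refine Nat.decreasingInduction (motive := fun t _ => idealDerSeries b K t ≤ I)
    (fun t _ => step t) ?_ (Nat.zero_le s)
  exact (idealDerSeries_le_derSeries K s).trans (hs ▸ bot_le)

end LeibnizAlgebra

lemma isDerivation_comp_flip_comp {L M : Type*} [AddCommGroup L] [Module ℂ L]
    [AddCommGroup M] [Module ℂ M] {b : L →ₗ[ℂ] L →ₗ[ℂ] L} (hb : IsLeibniz b)
    {bM : M →ₗ[ℂ] M →ₗ[ℂ] M} {f : M →ₗ[ℂ] L} {π : L →ₗ[ℂ] M} (hπ : Function.LeftInverse π f)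
    (hfb : ∀ u v, f (bM u v) = b (f u) (f v)) (hI : IsIdeal b (LinearMap.range f)) (y : L) :
    IsDerivation bM (π ∘ₗ b.flip y ∘ₗ f) := by
  intro u v
  obtain ⟨a, ha⟩ := (hI _ ⟨u, rfl⟩ y).1
  obtain ⟨c, hc⟩ := (hI _ ⟨v, rfl⟩ y).1
  simp only [LinearMap.comp_apply, LinearMap.flip_apply, ← ha, ← hc, hπ a, hπ c]
  rw [hfb, show b (b (f u) (f v)) y = b (f u) (b (f v) y) + b (b (f u) y) (f v) by rw [hb]; abel,
    ← ha, ← hc, ← hfb, ← hfb, ← map_add, hπ, add_comm]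


/-- `span {e_{k+1}, …, e_n}`, in the paper's 1-based numbering. -/
def supportedFrom (n k : ℕ) : Submodule ℂ (Fin n → ℂ) where
  carrier := {v | ∀ j : Fin n, j.val < k → v j = 0}
  add_mem' ha hb j hj := by simp [ha j hj, hb j hj]
  zero_mem' _ _ := rfl
  smul_mem' c _ hv j hj := by simp [hv j hj]

section SupportedFrom

variable {n k : ℕ}

lemma mem_supportedFrom {v : Fin n → ℂ} :
    v ∈ supportedFrom n k ↔ ∀ j : Fin n, j.val < k → v j = 0 := Iff.rfl

lemma supportedFrom_self : supportedFrom n n = ⊥ :=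
  eq_bot_iff.2 fun _ hv => funext fun j => hv j j.isLt

lemma finrank_le_finrank_comap_supportedFrom_add {V : Type*} [AddCommGroup V] [Module ℂ V]
    [FiniteDimensional ℂ V] (hk : k ≤ n) (g : V →ₗ[ℂ] Fin n → ℂ) :
    finrank ℂ V ≤ finrank ℂ (Submodule.comap g (supportedFrom n k)) + k := by
  let ψ := LinearMap.funLeft ℂ ℂ (Fin.castLE hk) ∘ₗ g
  have hker : LinearMap.ker ψ = Submodule.comap g (supportedFrom n k) := by
    ext y
    simp only [LinearMap.mem_ker, Submodule.mem_comap, mem_supportedFrom, funext_iff]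
    exact ⟨fun h j hj => h ⟨j, hj⟩, fun h j => h _ j.isLt⟩
  have hrange : finrank ℂ (LinearMap.range ψ) ≤ k :=
    (Submodule.finrank_le _).trans (Module.finrank_fin_fun ℂ).le
  have := LinearMap.finrank_range_add_finrank_ker ψ
  rw [hker] at this
  omega

lemma mem_supportedFrom_two_iff {v : Fin (n + 3) → ℂ} :
    v ∈ supportedFrom (n + 3) 2 ↔ v 0 = 0 ∧ v 1 = 0 := by
  refine ⟨fun hv => ⟨hv 0 (by simp), hv 1 (by simp)⟩, fun ⟨h0, h1⟩ j hj => ?_⟩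
  obtain rfl | rfl : j = 0 ∨ j = 1 := by simp only [Fin.ext_iff, Fin.val_zero, Fin.val_one]; omega
  exacts [h0, h1]

end SupportedFrom

section F1

variable {n : ℕ}

lemma bilin_cF1_apply (u v : Fin n → ℂ) (j : Fin n) :
    bilin n (cF1 n) u v j =
      if h : 2 ≤ j.val then
        v ⟨0, by omega⟩ * ((if j.val = 2 then u ⟨0, by omega⟩ else 0) + u ⟨j.val - 1, by omega⟩)
      else 0 := by
  have h0 : 0 < n := j.pos
  have inner : ∀ i : Fin n, ∑ k, u i * v k * cF1 n i k j =
      if (i.val = 0 ∧ j.val = 2) ∨ (1 ≤ i.val ∧ j.val = i.val + 1) then v ⟨0, h0⟩ * u i else 0 := by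
    intro i
    rw [Finset.sum_eq_single ⟨0, h0⟩ (fun k _ hk => by simp [cF1, Fin.ext_iff.not.1 hk]) (by simp)]
    simp [cF1, mul_comm]
  simp only [bilin, LinearMap.mk₂_apply, inner]
  split_ifs with h2 h3
  · rw [Finset.sum_eq_add (⟨0, h0⟩ : Fin n) ⟨1, by omega⟩ (by simp) (fun i _ hi => ?_)
      (by simp) (by simp)]
    · simp [h3, mul_add]
    · simp only [ne_eq, Fin.ext_iff] at hi
      exact if_neg (by omega)
  · rw [Finset.sum_eq_single (⟨j.val - 1, by omega⟩ : Fin n) (fun i _ hi => ?_) (by simp)]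
    · have hj : 1 ≤ j.val - 1 ∧ j.val = j.val - 1 + 1 := by omega
      rw [if_pos (Or.inr hj), zero_add]
    · simp only [ne_eq, Fin.ext_iff] at hi
      exact if_neg (by omega)
  · exact Finset.sum_eq_zero fun i _ => if_neg (by omega)

lemma bilin_cF1_mem_supportedFrom_two (u v : Fin n → ℂ) :
    bilin n (cF1 n) u v ∈ supportedFrom n 2 := fun j hj => by
  rw [bilin_cF1_apply, dif_neg (by omega)]

lemma bilin_cF1_mem_supportedFrom_succ {k : ℕ} (hk : 2 ≤ k) {u : Fin n → ℂ}
    (hu : u ∈ supportedFrom n k) (v : Fin n → ℂ) :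
    bilin n (cF1 n) u v ∈ supportedFrom n (k + 1) := fun j hj => by
  rw [bilin_cF1_apply]
  split_ifs with h2 h
  · rw [hu _ (by simp; omega), hu _ (by simp; omega)]; ring
  · rw [hu _ (by simp; omega)]; ring
  · rfl

lemma bilin_cF1_eq_smul (u v : Fin (n + 3) → ℂ) :
    bilin (n + 3) (cF1 (n + 3)) u v = v 0 • bilin (n + 3) (cF1 (n + 3)) u (Pi.single 0 1) := by
  funext j
  simp only [bilin_cF1_apply, Pi.smul_apply, smul_eq_mul]
  split_ifs <;> simp

lemma bilin_cF1_apply_two (u v : Fin (n + 3) → ℂ) :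
    bilin (n + 3) (cF1 (n + 3)) u v 2 = v 0 * (u 0 + u 1) := by
  simp only [bilin_cF1_apply, Fin.val_two]
  simp

lemma bilin_cF1_single_one_single_zero :
    bilin (n + 3) (cF1 (n + 3)) (Pi.single 1 1) (Pi.single 0 1) =
      bilin (n + 3) (cF1 (n + 3)) (Pi.single 0 1) (Pi.single 0 1) := by
  funext j
  simp only [bilin_cF1_apply]
  split_ifs <;> simp [Pi.single_apply, Fin.ext_iff] <;> split_ifs <;> simp <;> omega

lemma exists_bilin_cF1_single_zero_eq {k : ℕ} (hk : 1 ≤ k) {v : Fin (n + 3) → ℂ}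
    (hv : v ∈ supportedFrom (n + 3) (k + 1)) :
    ∃ w ∈ supportedFrom (n + 3) k, bilin (n + 3) (cF1 (n + 3)) w (Pi.single 0 1) = v := by
  let w : Fin (n + 3) → ℂ := fun i =>
    if h : 1 ≤ i.val ∧ i.val + 1 < n + 3 then v ⟨i.val + 1, h.2⟩ else 0
  have hw : ∀ i : Fin (n + 3), 1 ≤ i.val → ∀ h : i.val + 1 < n + 3, w i = v ⟨i.val + 1, h⟩ :=
    fun i hi h => dif_pos ⟨hi, h⟩
  refine ⟨w, fun i hi => ?_, funext fun j => ?_⟩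
  · exact dite_eq_right_iff.2 fun h => hv _ (by simp; omega)
  · rw [bilin_cF1_apply]
    split_ifs with h2 h
    · have : w ⟨0, by omega⟩ = 0 := dif_neg (by simp)
      rw [this, hw _ (by simp; omega) (by simp; omega)]
      simpa using congrArg v (Fin.ext (by simp; omega))
    · rw [hw _ (by simp; omega) (by simp; omega)]
      simpa using congrArg v (Fin.ext (by simp; omega))
    · exact (hv j (by omega)).symm

end F1

namespace IsDerivation

variable {n : ℕ} {D : (Fin (n + 3) → ℂ) →ₗ[ℂ] Fin (n + 3) → ℂ}
  (hD : IsDerivation (bilin (n + 3) (cF1 (n + 3))) D)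
include hD

lemma apply_mem_supportedFrom_two_of_mem {v : Fin (n + 3) → ℂ}
    (hv : v ∈ supportedFrom (n + 3) 2) : D v ∈ supportedFrom (n + 3) 2 := by
  obtain ⟨w, -, rfl⟩ := exists_bilin_cF1_single_zero_eq le_rfl hv
  rw [hD]
  exact add_mem (bilin_cF1_mem_supportedFrom_two _ _) (bilin_cF1_mem_supportedFrom_two _ _)

variable (h0 : D (Pi.single 0 1) ∈ supportedFrom (n + 3) 2)
include h0

lemma apply_single_one_mem_supportedFrom_two :
    D (Pi.single 1 1) ∈ supportedFrom (n + 3) 2 := by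
  obtain ⟨h00, h01⟩ := mem_supportedFrom_two_iff.1 h0
  have h10 : D (Pi.single 1 1) 0 = 0 := by
    have h := congrFun (hD (Pi.single 0 1) (Pi.single 1 1)) 2
    rw [bilin_cF1_eq_smul _ (Pi.single 1 1)] at h
    simpa [bilin_cF1_apply_two] using h.symm
  have h11 : D (Pi.single 1 1) 1 = 0 := by
    have h := congrFun (congrArg D bilin_cF1_single_one_single_zero) 2
    rw [hD, hD] at h
    simpa [bilin_cF1_apply_two, h00, h01, h10] using h
  exact mem_supportedFrom_two_iff.2 ⟨h10, h11⟩

lemma apply_mem_supportedFrom_two (v : Fin (n + 3) → ℂ) : D v ∈ supportedFrom (n + 3) 2 := by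
  have hr : v - v 0 • Pi.single 0 1 - v 1 • Pi.single 1 1 ∈ supportedFrom (n + 3) 2 :=
    mem_supportedFrom_two_iff.2 ⟨by simp, by simp⟩
  have := add_mem (add_mem (hD.apply_mem_supportedFrom_two_of_mem hr)
    (Submodule.smul_mem _ (v 0) h0))
    (Submodule.smul_mem _ (v 1) (hD.apply_single_one_mem_supportedFrom_two h0))
  convert this using 1
  simp only [map_sub, map_smul]
  abel

lemma apply_mem_supportedFrom_succ {k : ℕ} (hk : 1 ≤ k) {v : Fin (n + 3) → ℂ}
    (hv : v ∈ supportedFrom (n + 3) k) : D v ∈ supportedFrom (n + 3) (k + 1) := by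
  induction k, hk using Nat.le_induction generalizing v with
  | base => exact hD.apply_mem_supportedFrom_two h0 v
  | succ k hk ih =>
    obtain ⟨w, hw, rfl⟩ := exists_bilin_cF1_single_zero_eq hk hv
    rw [hD, bilin_cF1_eq_smul w, (mem_supportedFrom_two_iff.1 h0).1, zero_smul, add_zero]
    exact bilin_cF1_mem_supportedFrom_succ (by omega) (ih hw) _

end IsDerivation

section RightMultiplication

variable {L : Type*} [AddCommGroup L] [Module ℂ L] {b : L →ₗ[ℂ] L →ₗ[ℂ] L} {n : ℕ}
  {f : (Fin (n + 3) → ℂ) →ₗ[ℂ] L} {π : L →ₗ[ℂ] Fin (n + 3) → ℂ}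
  (hπ : Function.LeftInverse π f)
  (hfb : ∀ u v, f (bilin (n + 3) (cF1 (n + 3)) u v) = b (f u) (f v))
include hπ hfb

lemma range_le_comap_supportedFrom_two :
    LinearMap.range f ≤ (supportedFrom (n + 3) 2).comap (π ∘ₗ b (f (Pi.single 0 1))) := by
  rintro _ ⟨v, rfl⟩
  simpa only [Submodule.mem_comap, LinearMap.comp_apply, ← hfb, hπ _]
    using bilin_cF1_mem_supportedFrom_two _ _

variable (hb : IsLeibniz b) (hI : IsIdeal b (LinearMap.range f))
include hb hI

omit hfb hb in
lemma apply_leftInverse_bracket (u : Fin (n + 3) → ℂ) (y : L) : f (π (b (f u) y)) = b (f u) y := by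
  obtain ⟨w, hw⟩ := (hI _ ⟨u, rfl⟩ y).1
  rw [← hw, hπ w]

lemma isIdeal_comap_supportedFrom_two :
    IsIdeal b ((supportedFrom (n + 3) 2).comap (π ∘ₗ b (f (Pi.single 0 1)))) := by
  have hD := isDerivation_comp_flip_comp hb hπ hfb hI
  -- `[e₁, [x, y]] = [[e₁, x], y] - [[e₁, y], x]`, read in coordinates
  have key : ∀ x y, π (b (f (Pi.single 0 1)) (b x y)) =
      π (b (f (π (b (f (Pi.single 0 1)) x))) y) - π (b (f (π (b (f (Pi.single 0 1)) y))) x) :=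
    fun x y => hπ.injective (by
      rw [apply_leftInverse_bracket hπ hI _ (b x y), map_sub,
        apply_leftInverse_bracket hπ hI (π _) y, apply_leftInverse_bracket hπ hI (π _) x,
        apply_leftInverse_bracket hπ hI _ x, apply_leftInverse_bracket hπ hI _ y, hb])
  intro x hx y
  simp only [Submodule.mem_comap, LinearMap.comp_apply] at hx ⊢
  have h₁ := (hD y).apply_mem_supportedFrom_two_of_mem hx
  have h₂ := (hD x).apply_mem_supportedFrom_two hx (π (b (f (Pi.single 0 1)) y))
  simp only [LinearMap.comp_apply, LinearMap.flip_apply] at h₁ h₂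
  exact ⟨key x y ▸ sub_mem h₁ h₂, key y x ▸ sub_mem h₂ h₁⟩

lemma idealLCS_eq_bot_of_le_comap {Q : Submodule ℂ L}
    (hQK : Q ≤ (supportedFrom (n + 3) 2).comap (π ∘ₗ b (f (Pi.single 0 1))))
    (hQ : bracketSpan b Q Q ≤ LinearMap.range f) : idealLCS b Q (n + 3) = ⊥ := by
  have hD := isDerivation_comp_flip_comp hb hπ hfb hI
  rw [show n + 3 = 2 + (n + 1) by omega]
  refine eq_bot_iff.2 ((idealLCS_add_le (m := 2)
    (V := fun k => (supportedFrom (n + 3) (k + 2)).map f) ?_ ?_ (n + 1)).trans ?_)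
  · refine bracketSpan_le fun x hx y hy => ?_
    obtain ⟨u, rfl⟩ := hQ hx
    rw [← apply_leftInverse_bracket hπ hI u y]
    exact Submodule.mem_map_of_mem ((hD y).apply_mem_supportedFrom_two (hQK hy) u)
  · rintro k _ ⟨u, hu, rfl⟩ y hy
    rw [← apply_leftInverse_bracket hπ hI u y]
    exact Submodule.mem_map_of_mem ((hD y).apply_mem_supportedFrom_succ (hQK hy) (by omega) hu)
  · simp [supportedFrom_self]

end RightMultiplication

theorem finrank_le_of_isNilradical_range_cF1 {L : Type*} [AddCommGroup L] [Module ℂ L]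
    [FiniteDimensional ℂ L] {b : L →ₗ[ℂ] L →ₗ[ℂ] L} (hb : IsLeibniz b) (hsolv : IsSolvableAlg b)
    {n : ℕ} {f : (Fin (n + 3) → ℂ) →ₗ[ℂ] L} (hf : Function.Injective f)
    (hI : IsNilradical b (LinearMap.range f))
    (hfb : ∀ u v, f (bilin (n + 3) (cF1 (n + 3)) u v) = b (f u) (f v)) :
    finrank ℂ L ≤ n + 3 + 2 := by
  obtain ⟨π, hπ⟩ := f.exists_leftInverse_of_injective (LinearMap.ker_eq_bot.2 hf)
  replace hπ : Function.LeftInverse π f := LinearMap.congr_fun hπ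
  set K := (supportedFrom (n + 3) 2).comap (π ∘ₗ b (f (Pi.single 0 1)))
  have hKI : K ≤ LinearMap.range f :=
    hI.le_of_isSolvableAlg hb hsolv (isIdeal_comap_supportedFrom_two hπ hfb hb hI.1.1)
      (range_le_comap_supportedFrom_two hπ hfb) fun Q _ hQK hQ =>
        ⟨n + 3, idealLCS_eq_bot_of_le_comap hπ hfb hb hI.1.1 hQK hQ⟩
  calc finrank ℂ L ≤ finrank ℂ K + 2 := finrank_le_finrank_comap_supportedFrom_add (by omega) _
    _ ≤ finrank ℂ (LinearMap.range f) + 2 := by gcongr; exact Submodule.finrank_mono hKI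
    _ = n + 3 + 2 := by rw [LinearMap.finrank_range_of_inj hf, finrank_fin_fun]

theorem statement13 (n : ℕ) (hn : 4 ≤ n) {L : Type*}
    [AddCommGroup L] [Module ℂ L] [FiniteDimensional ℂ L]
    (b : L →ₗ[ℂ] L →ₗ[ℂ] L) (hb : IsLeibniz b)
    (hsolv : IsSolvableAlg b) (hnotnilp : ¬ IsNilpotentAlg b)
    (hnil : NilradicalIso b (bilin n (cF1 n))) :
    Module.finrank ℂ L = n + 1 ∨ Module.finrank ℂ L = n + 2 := by
  obtain ⟨m, rfl⟩ : ∃ m, n = m + 3 := ⟨n - 3, by omega⟩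
  obtain ⟨I, hI, f, hf, rfl, hfb⟩ := hnil
  have hlt : m + 3 < finrank ℂ L := by
    simpa [LinearMap.finrank_range_of_inj hf] using Submodule.finrank_lt (hI.ne_top hnotnilp)
  have hle := finrank_le_of_isNilradical_range_cF1 hb hsolv hf hI hfb
  omega
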